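/- arXiv:2112.06849 — 3 statements merged into one kernel-verified Lean document; each statement's English description precedes it below -/
import Mathlib

section
/- Let (Ω, F, P) be a probability space, G ⊂ F a sub-σ-algebra, and let X be a random variable with values in a standard Borel space S. Let X₁, X₂, … be conditionally i.i.d. given G, each with the conditional law of X given G, and let Y be a G-measurable S-valued random variable such that P(X = Y | G) > 0 almost surely. Then the law of Y is absolutely continuous with respect to the law of X. -/
open MeasureTheory ProbabilityTheory

/-! Since `Y ⁻¹' A` is `G`-measurable,
`∫_{Y ∈ A} P(X = Y ∣ G) dP = P(Y ∈ A, X = Y) ≤ P(X ∈ A) = 0`;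
the integrand is positive almost surely, so `P(Y ∈ A) = 0`. -/

lemma measure_eq_zero_of_condExp_indicator_pos {Ω : Type*} {m m₀ : MeasurableSpace Ω}
    {μ : Measure Ω} [IsFiniteMeasure μ] (hm : m ≤ m₀) {s D : Set Ω}
    (hs : MeasurableSet[m] s) (hD : MeasurableSet[m₀] D)
    (hpos : ∀ᵐ ω ∂μ, ω ∈ s → 0 < (μ[D.indicator (fun _ => (1 : ℝ)) | m]) ω)
    (hsD : μ (s ∩ D) = 0) : μ s = 0 := by
  set f : Ω → ℝ := D.indicator fun _ => 1
  have hf : Integrable f μ := (integrable_const (1 : ℝ)).indicator hD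
  have hint : ∫ ω in s, (μ[f | m]) ω ∂μ = 0 := by
    rw [setIntegral_condExp hm hf hs, setIntegral_indicator hD, setIntegral_const,
      measureReal_def, hsD, ENNReal.toReal_zero, zero_smul]
  have hf_nonneg : 0 ≤ᵐ[μ] f := ae_of_all _ (Set.indicator_nonneg fun _ _ => zero_le_one)
  have hzero : μ[f | m] =ᵐ[μ.restrict s] 0 :=
    (setIntegral_eq_zero_iff_of_nonneg_ae (ae_restrict_of_ae (condExp_nonneg hf_nonneg))
      integrable_condExp.integrableOn).mp hint
  have hnot_mem : ∀ᵐ ω ∂μ, ω ∉ s := by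
    filter_upwards [hpos, (ae_restrict_iff' (hm _ hs)).mp hzero] with ω hω hω0 hωs
    exact (hω hωs).ne' (hω0 hωs)
  exact measure_eq_zero_iff_ae_notMem.mpr hnot_mem

theorem law_absolutelyContinuous_of_cond_prob_pos_general
    {Ω S : Type*} [mΩ : MeasurableSpace Ω]
    [MeasurableSpace S] [StandardBorelSpace S]
    (μ : Measure Ω) [IsProbabilityMeasure μ]
    (G : MeasurableSpace Ω) (hG : G ≤ mΩ)
    (X : Ω → S) (hX : Measurable[mΩ] X)
    (Y : Ω → S) (hY : Measurable[G] Y)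
    (hpos : ∀ᵐ ω ∂μ,
      0 < (μ[Set.indicator {ω' | X ω' = Y ω'} (fun _ => (1 : ℝ)) | G]) ω) :
    @Measure.map Ω S mΩ _ Y μ ≪ @Measure.map Ω S mΩ _ X μ := by
  have hY₀ : Measurable[mΩ] Y := hY.mono hG le_rfl
  refine Measure.AbsolutelyContinuous.mk fun A hA hXA => ?_
  rw [Measure.map_apply hX hA] at hXA
  rw [Measure.map_apply hY₀ hA]
  refine measure_eq_zero_of_condExp_indicator_pos hG (hY hA) (measurableSet_eq_fun hX hY₀)
    (hpos.mono fun ω hω _ => hω) (measure_mono_null ?_ hXA)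
  rintro ω ⟨hωA, hωXY : X ω = Y ω⟩
  rw [Set.mem_preimage, hωXY]
  exact hωA

/-- If `X₁, X₂, …` are conditionally i.i.d. given a sub-σ-algebra `G`, each
with the conditional law of `X` given `G`, and `Y` is `G`-measurable with
`P(X = Y ∣ G) > 0` almost surely, then the law of `Y` is absolutely continuous
with respect to the law of `X`. -/
theorem law_absolutelyContinuous_of_cond_prob_pos
    {Ω S : Type*} [mΩ : MeasurableSpace Ω] [StandardBorelSpace Ω] [Nonempty Ω]
    [MeasurableSpace S] [StandardBorelSpace S] [Nonempty S]
    (μ : Measure Ω) [IsProbabilityMeasure μ]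
    (G : MeasurableSpace Ω) (hG : G ≤ mΩ)
    (X : Ω → S) (hX : Measurable[mΩ] X)
    (Xs : ℕ → Ω → S) (hXs : ∀ k, Measurable[mΩ] (Xs k))
    (hindep : iCondIndepFun G hG Xs μ)
    (hlaw : ∀ k : ℕ, ∀ A : Set S, MeasurableSet A →
      μ[Set.indicator (Xs k ⁻¹' A) (fun _ => (1 : ℝ)) | G]
        =ᵐ[μ] μ[Set.indicator (X ⁻¹' A) (fun _ => (1 : ℝ)) | G])
    (Y : Ω → S) (hY : Measurable[G] Y)
    (hpos : ∀ᵐ ω ∂μ,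
      0 < (μ[Set.indicator {ω' | X ω' = Y ω'} (fun _ => (1 : ℝ)) | G]) ω) :
    @Measure.map Ω S mΩ _ Y μ ≪ @Measure.map Ω S mΩ _ X μ :=
  law_absolutelyContinuous_of_cond_prob_pos_general (mΩ := mΩ) μ G hG X hX Y hY hpos
end

section
/- Let h : [a,d] → ℝ ∪ {−∞} be upper semicontinuous, bounded above, and not identically −∞ on either [a,b] or [c,d], where a < b < c < d. Let B be a standard Brownian motion on [a,d] started from B(a) = 0. Then almost surely max_{y ∈ [a,b]} (B(y) + h(y)) ≠ max_{y ∈ [c,d]} (B(y) + h(y)). -/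
open MeasureTheory

/-- A standard one-dimensional Brownian motion started from time `a` (with
`B a = 0`): continuous paths, centered Gaussian increments of variance `t−s`,
and independent increments. -/
def IsStandardBM {Ω : Type*} [MeasurableSpace Ω] (P : MeasureTheory.Measure Ω)
    (a : ℝ) (B : ℝ → Ω → ℝ) : Prop :=
  (∀ t, Measurable (B t)) ∧
  (∀ ω, Continuous fun t => B t ω) ∧
  (∀ ω, B a ω = 0) ∧
  (∀ s t : ℝ, a ≤ s → s ≤ t →
    MeasureTheory.Measure.map (fun ω => B t ω - B s ω) P =
      ProbabilityTheory.gaussianReal 0 (Real.toNNReal (t - s))) ∧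
  (∀ n : ℕ, ∀ t : Fin (n + 1) → ℝ, Monotone t → (∀ i, a ≤ t i) →
    ProbabilityTheory.iIndepFun
      (fun i : Fin n => fun ω => B (t i.succ) ω - B (t i.castSucc) ω) P)

/-!
Write `S₁ = ⨆_{[a,b]} (B - B b + h)` and `S₂ = ⨆_{[c,d]} (B - B c + h)`; both are finite, and the
two maxima agree exactly when `S₁ - S₂ = B c - B b`. Brownian motion is a Gaussian process, and the
increments `B y - B b` (`y ≤ b`) and `B y - B c` (`y ≥ c`) are uncorrelated with `B c - B b`, so
the whole family of them is independent of `B c - B b`. Since `S₁` and `S₂` are measurable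
functions of countably many of these increments (continuity of the paths), `S₁ - S₂` is
independent of the atomless Gaussian `B c - B b` and equals it with probability zero.
-/

open ProbabilityTheory

namespace EReal

noncomputable def addLeftOrderIso (r : ℝ) : EReal ≃o EReal where
  toFun x := r + x
  invFun x := x - r
  left_inv _ := add_sub_cancel_left
  right_inv x := by
    change (r : EReal) + (x - r) = x
    rw [add_comm]
    exact sub_add_cancel
  map_rel_iff' := (addLECancellable_coe r).add_le_add_iff_left

lemma coe_add_iSup {ι : Sort*} (r : ℝ) (f : ι → EReal) :
    (r : EReal) + ⨆ i, f i = ⨆ i, ((r : EReal) + f i) :=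
  (addLeftOrderIso r).map_iSup f

lemma le_of_forall_pos_le_coe_add {x y : EReal} (h : ∀ ε : ℝ, 0 < ε → x ≤ ε + y) : x ≤ y := by
  induction y using EReal.rec with
  | bot => simpa using h 1 one_pos
  | top => exact le_top
  | coe y =>
    induction x using EReal.rec with
    | bot => exact bot_le
    | top =>
      have := h 1 one_pos
      rw [top_le_iff, ← EReal.coe_add] at this
      exact absurd this (EReal.coe_ne_top _)
    | coe x =>
      refine EReal.coe_le_coe_iff.2 (le_of_forall_pos_le_add fun ε hε => ?_)
      have := h ε hε
      rw [← EReal.coe_add, EReal.coe_le_coe_iff] at this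
      linarith

end EReal

/-- Computes `⨆ y : s, g y + h y` from the values of a uniformly continuous `g` at the rationals
(`ratSupAdd_eq_iSup`); the uncountable suprema involve only `h`, so it is a measurable function
of those values. -/
noncomputable def ratSupAdd (h : ℝ → EReal) (s : Set ℝ) (x : ℚ → ℝ) : EReal :=
  ⨅ n : ℕ, ⨆ r : ℚ, ((x r : EReal) + ⨆ y ∈ s ∩ Metric.ball (r : ℝ) (1 / (n + 1)), h y)

@[fun_prop]
lemma measurable_ratSupAdd (h : ℝ → EReal) (s : Set ℝ) : Measurable (ratSupAdd h s) :=
  .iInf fun _ => .iSup fun r => (measurable_coe_real_ereal.comp (measurable_pi_apply r)).add_const _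

section ratSupAdd

variable {h : ℝ → EReal} {s : Set ℝ} {g : ℝ → ℝ}

lemma coe_add_le_iSup_rat (hg : Continuous g) {y : ℝ} (hy : y ∈ s) {δ : ℝ} (hδ : 0 < δ) :
    (g y : EReal) + h y ≤ ⨆ r : ℚ, ((g r : EReal) + ⨆ z ∈ s ∩ Metric.ball (r : ℝ) δ, h z) := by
  refine EReal.add_le_of_forall_lt fun u hu v hv => ?_
  have hopen : IsOpen ({t | u < (g t : EReal)} ∩ Metric.ball y δ) :=
    (isOpen_lt continuous_const (continuous_coe_real_ereal.comp hg)).inter Metric.isOpen_ball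
  obtain ⟨r, hur, hry⟩ :=
    Rat.denseRange_cast.exists_mem_open hopen ⟨y, hu, Metric.mem_ball_self hδ⟩
  have hyr : y ∈ s ∩ Metric.ball (r : ℝ) δ := ⟨hy, Metric.mem_ball_comm.1 hry⟩
  calc u + v ≤ (g r : EReal) + h y := add_le_add hur.le hv.le
    _ ≤ (g r : EReal) + ⨆ z ∈ s ∩ Metric.ball (r : ℝ) δ, h z :=
        add_le_add le_rfl (le_iSup₂_of_le y hyr le_rfl)
    _ ≤ _ := le_iSup_of_le r le_rfl

lemma iSup_rat_le_coe_add (hg : UniformContinuous g) {ε : ℝ} (hε : 0 < ε) :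
    ∃ δ > 0, ⨆ r : ℚ, ((g r : EReal) + ⨆ z ∈ s ∩ Metric.ball (r : ℝ) δ, h z) ≤
      ε + ⨆ y : s, ((g y : EReal) + h y) := by
  obtain ⟨δ, hδ, hgδ⟩ := Metric.uniformContinuous_iff.1 hg ε hε
  refine ⟨δ, hδ, iSup_le fun r => ?_⟩
  rw [EReal.coe_add_iSup]
  refine iSup_le fun z => ?_
  rw [EReal.coe_add_iSup]
  refine iSup_le fun ⟨hzs, hzr⟩ => ?_
  have hgz : g r ≤ ε + g z := by
    have := hgδ (Metric.mem_ball.1 hzr)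
    rw [Real.dist_eq, abs_lt] at this
    linarith
  calc (g r : EReal) + h z ≤ ((ε + g z : ℝ) : EReal) + h z :=
        add_le_add_left (EReal.coe_le_coe_iff.2 hgz) _
    _ = ε + ((g z : EReal) + h z) := by rw [EReal.coe_add, add_assoc]
    _ ≤ _ := add_le_add le_rfl (le_iSup (fun y : s => (g y : EReal) + h y) ⟨z, hzs⟩)

theorem ratSupAdd_eq_iSup (hg : UniformContinuous g) :
    ratSupAdd h s (fun r => g r) = ⨆ y : s, ((g y : EReal) + h y) := by
  refine le_antisymm (EReal.le_of_forall_pos_le_coe_add fun ε hε => ?_) ?_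
  · obtain ⟨δ, hδ, hle⟩ := iSup_rat_le_coe_add (s := s) (h := h) hg hε
    obtain ⟨n, hn⟩ := exists_nat_one_div_lt hδ
    refine (iInf_le _ n).trans (le_trans (iSup_mono fun r => ?_) hle)
    exact add_le_add le_rfl (biSup_mono fun z hz =>
      (⟨hz.1, Metric.ball_subset_ball hn.le hz.2⟩ : z ∈ s ∩ Metric.ball (r : ℝ) δ))
  · exact le_iInf fun n => iSup_le fun y =>
      coe_add_le_iSup_rat hg.continuous y.2 Nat.one_div_pos_of_nat

end ratSupAdd

theorem iSup_Icc_coe_add_eq_add_ratSupAdd {h : ℝ → EReal} {f : ℝ → ℝ} (hf : Continuous f)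
    {p q : ℝ} (hpq : p ≤ q) (e : ℝ) {M : ℝ} (hM : ∀ y ∈ Set.Icc p q, h y ≤ M)
    (hne : ∃ y ∈ Set.Icc p q, h y ≠ ⊥) :
    ⨆ y : Set.Icc p q, ((f y : EReal) + h y) =
      ((f e + (ratSupAdd h (Set.Icc p q)
        fun r => Set.IccExtend hpq (fun y => f y - f e) r).toReal : ℝ) : EReal) := by
  set g := Set.IccExtend hpq (fun y => f y - f e)
  have hg : UniformContinuous g :=
    (CompactSpace.uniformContinuous_of_continuous (by fun_prop)).comp
      (LipschitzWith.projIcc hpq).uniformContinuous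
  set S := ⨆ y : Set.Icc p q, ((g y : EReal) + h y)
  have hshift : ⨆ y : Set.Icc p q, ((f y : EReal) + h y) = f e + S := by
    rw [EReal.coe_add_iSup]
    congr! 2 with y
    rw [show g y = f y - f e from Set.IccExtend_val hpq _ y, ← add_assoc, ← EReal.coe_add,
      add_sub_cancel]
  have hS_ne_bot : S ≠ ⊥ := by
    obtain ⟨y, hy, hhy⟩ := hne
    exact ne_bot_of_le_ne_bot (EReal.add_ne_bot_iff.2 ⟨EReal.coe_ne_bot _, hhy⟩)
      (le_iSup (fun y : Set.Icc p q => (g y : EReal) + h y) ⟨y, hy⟩)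
  have hS_ne_top : S ≠ ⊤ := by
    obtain ⟨C, hC⟩ := isCompact_Icc.bddAbove_image hg.continuous.continuousOn (K := Set.Icc p q)
    refine ne_top_of_le_ne_top (EReal.coe_ne_top (C + M)) (iSup_le fun y => ?_)
    rw [EReal.coe_add]
    exact add_le_add (EReal.coe_le_coe_iff.2 (hC ⟨y, y.2, rfl⟩)) (hM y y.2)
  rw [hshift, ratSupAdd_eq_iSup hg, EReal.coe_add, EReal.coe_toReal hS_ne_top hS_ne_bot]

theorem ProbabilityTheory.IsGaussianProcess.comp_sub {S T Ω : Type*} {mΩ : MeasurableSpace Ω}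
    {P : Measure Ω} {Z : T → Ω → ℝ} (hZ : IsGaussianProcess Z P) (f g : S → T) :
    IsGaussianProcess (fun s => Z (f s) - Z (g s)) P := by
  classical
  exact hZ.of_isGaussianProcess fun s => ⟨{f s, g s},
    ContinuousLinearMap.proj (R := ℝ) (φ := fun _ => ℝ) ⟨f s, by simp⟩ -
      ContinuousLinearMap.proj ⟨g s, by simp⟩, fun ω => by simp⟩

theorem ProbabilityTheory.IsGaussianProcess.indepFun_of_covariance_sub_eq_zero
    {S₁ S₂ T Ω : Type*} {mΩ : MeasurableSpace Ω} {P : Measure Ω} {Z : T → Ω → ℝ}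
    (hZ : IsGaussianProcess Z P) {f₁ g₁ : S₁ → T} {f₂ g₂ : S₂ → T}
    (h : ∀ i j, cov[Z (f₁ i) - Z (g₁ i), Z (f₂ j) - Z (g₂ j); P] = 0) :
    IndepFun (fun ω i => Z (f₁ i) ω - Z (g₁ i) ω) (fun ω j => Z (f₂ j) ω - Z (g₂ j) ω) P := by
  have hW := hZ.comp_sub (Sum.elim f₁ f₂) (Sum.elim g₁ g₂)
  refine IsGaussianProcess.indepFun_of_covariance_eq_zero ?_
    (fun i => hW.aemeasurable (.inl i)) (fun j => hW.aemeasurable (.inr j)) h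
  convert hW using 1
  ext (i | j) <;> rfl

theorem ProbabilityTheory.IndepFun.measure_eq_eq_zero {Ω α : Type*} {mΩ : MeasurableSpace Ω}
    [MeasurableSpace α] [MeasurableEq α] {P : Measure Ω} [IsFiniteMeasure P] {X Y : Ω → α}
    (hXY : IndepFun X Y P) (hX : AEMeasurable X P) (hY : AEMeasurable Y P)
    [NullSingletonClass (P.map Y)] :
    P {ω | X ω = Y ω} = 0 := by
  have hslice (x : α) : Prod.mk x ⁻¹' Set.diagonal α = {x} := by ext; simp [eq_comm]
  change P ((fun ω => (X ω, Y ω)) ⁻¹' Set.diagonal α) = 0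
  rw [← Measure.map_apply_of_aemeasurable (hX.prodMk hY) measurableSet_diagonal,
    hXY.map_prod_eq_prod_map_map hX hY, Measure.prod_apply measurableSet_diagonal]
  simp [hslice]

namespace IsStandardBM

variable {Ω : Type*} [MeasurableSpace Ω] {P : Measure Ω} {a : ℝ} {B : ℝ → Ω → ℝ}

theorem hasIndepIncrements (hB : IsStandardBM P a B) :
    HasIndepIncrements (fun t : Set.Ici a => B t) P :=
  fun n t ht => hB.2.2.2.2 n (fun i => t i) ht (fun i => (t i).2)

theorem isGaussianProcess (hB : IsStandardBM P a B) :
    IsGaussianProcess (fun t : Set.Ici a => B t) P := by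
  refine hB.hasIndepIncrements.isGaussianProcess (fun t => ⟨?_⟩) (ae_of_all _ hB.2.2.1)
  have hlaw := hB.2.2.2.1 a t le_rfl t.2
  simp only [hB.2.2.1, sub_zero] at hlaw
  rw [hlaw]
  infer_instance

theorem covariance_sub_sub_eq_zero (hB : IsStandardBM P a B) {r s t : ℝ} (har : a ≤ r)
    (hrs : r ≤ s) (hst : s ≤ t) : cov[B s - B r, B t - B s; P] = 0 := by
  have hZ := hB.isGaussianProcess
  exact (hB.hasIndepIncrements.indepFun_sub_sub (r := ⟨r, har⟩) (s := ⟨s, har.trans hrs⟩)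
    (t := ⟨t, (har.trans hrs).trans hst⟩) hrs hst).covariance_eq_zero
    hZ.hasGaussianLaw_sub.memLp_two hZ.hasGaussianLaw_sub.memLp_two

theorem indepFun_IccExtend_sub (hB : IsStandardBM P a B) {b c d : ℝ} (hab : a ≤ b)
    (hbc : b ≤ c) (hcd : c ≤ d) :
    IndepFun (fun ω => Sum.elim (fun r : ℚ => Set.IccExtend hab (fun y => B y ω - B b ω) r)
      (fun r : ℚ => Set.IccExtend hcd (fun y => B y ω - B c ω) r)) (fun ω => B c ω - B b ω) P := by
  have hac := hab.trans hbc
  let f₁ : ℚ ⊕ ℚ → Set.Ici a :=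
    Sum.elim (fun r => ⟨Set.projIcc a b hab r, (Set.projIcc a b hab r).2.1⟩)
      (fun r => ⟨Set.projIcc c d hcd r, hac.trans (Set.projIcc c d hcd r).2.1⟩)
  let g₁ : ℚ ⊕ ℚ → Set.Ici a := Sum.elim (fun _ => ⟨b, hab⟩) (fun _ => ⟨c, hac⟩)
  have hind := hB.isGaussianProcess.indepFun_of_covariance_sub_eq_zero (f₁ := f₁) (g₁ := g₁)
    (f₂ := fun _ : Unit => ⟨c, hac⟩) (g₂ := fun _ : Unit => ⟨b, hab⟩) ?_
  · convert hind.comp measurable_id (measurable_pi_apply ()) using 1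
    · ext ω (i | i) <;> rfl
    · rfl
  rintro (r | r) -
  · change cov[B (Set.projIcc a b hab r) - B b, B c - B b; P] = 0
    rw [← neg_sub, covariance_neg_left,
      hB.covariance_sub_sub_eq_zero (Set.projIcc a b hab r).2.1 (Set.projIcc a b hab r).2.2 hbc,
      neg_zero]
  · change cov[B (Set.projIcc c d hcd r) - B c, B c - B b; P] = 0
    rw [covariance_comm, hB.covariance_sub_sub_eq_zero hab hbc (Set.projIcc c d hcd r).2.1]

theorem nullSingletonClass_map_sub (hB : IsStandardBM P a B) {s t : ℝ} (has : a ≤ s)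
    (hst : s < t) : NullSingletonClass (P.map fun ω => B t ω - B s ω) := by
  rw [hB.2.2.2.1 s t has hst.le]
  exact nullSingletonClass_gaussianReal (by simpa using hst)

theorem measure_eq_sub_eq_zero [IsFiniteMeasure P] (hB : IsStandardBM P a B) {b c d : ℝ}
    (hab : a ≤ b) (hbc : b < c) (hcd : c ≤ d) {Φ : (ℚ ⊕ ℚ → ℝ) → ℝ} (hΦ : Measurable Φ) :
    P {ω | Φ (Sum.elim (fun r : ℚ => Set.IccExtend hab (fun y => B y ω - B b ω) r)
      (fun r : ℚ => Set.IccExtend hcd (fun y => B y ω - B c ω) r)) = B c ω - B b ω} = 0 := by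
  have := hB.nullSingletonClass_map_sub hab hbc
  have hmeas : Measurable fun ω => Sum.elim
      (fun r : ℚ => Set.IccExtend hab (fun y => B y ω - B b ω) r)
      (fun r : ℚ => Set.IccExtend hcd (fun y => B y ω - B c ω) r) :=
    measurable_pi_iff.2 fun i => by cases i <;> exact (hB.1 _).sub (hB.1 _)
  exact ((hB.indepFun_IccExtend_sub hab hbc.le hcd).comp hΦ measurable_id).measure_eq_eq_zero
    (Y := fun ω => B c ω - B b ω) (hΦ.comp hmeas).aemeasurable ((hB.1 c).sub (hB.1 b)).aemeasurable

end IsStandardBM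

theorem max_over_disjoint_intervals_ne_general
    {Ω : Type*} [MeasurableSpace Ω] (P : Measure Ω) [IsProbabilityMeasure P]
    (a b c d : ℝ) (hab : a < b) (hbc : b < c) (hcd : c < d)
    (B : ℝ → Ω → ℝ) (hB : IsStandardBM P a B)
    (h : ℝ → EReal)
    (hbdd : ∃ M : ℝ, ∀ y ∈ Set.Icc a d, h y ≤ (M : EReal))
    (hne₁ : ∃ y ∈ Set.Icc a b, h y ≠ ⊥)
    (hne₂ : ∃ y ∈ Set.Icc c d, h y ≠ ⊥) :
    ∀ᵐ ω ∂P,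
      (⨆ y : Set.Icc a b, (((B y.1 ω : ℝ) : EReal) + h y.1)) ≠
      (⨆ y : Set.Icc c d, (((B y.1 ω : ℝ) : EReal) + h y.1)) := by
  obtain ⟨M, hM⟩ := hbdd
  let Φ : (ℚ ⊕ ℚ → ℝ) → ℝ := fun x =>
    (ratSupAdd h (Set.Icc a b) fun r => x (.inl r)).toReal -
      (ratSupAdd h (Set.Icc c d) fun r => x (.inr r)).toReal
  refine ae_iff.2 (measure_mono_null (fun ω hω => ?_)
    (hB.measure_eq_sub_eq_zero hab.le hbc hcd.le (by fun_prop : Measurable Φ)))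
  rw [Set.mem_ofPred_eq, not_not,
    iSup_Icc_coe_add_eq_add_ratSupAdd (f := fun t => B t ω) (hB.2.1 ω) hab.le b
      (fun y hy => hM y (Set.Icc_subset_Icc le_rfl (hbc.trans hcd).le hy)) hne₁,
    iSup_Icc_coe_add_eq_add_ratSupAdd (f := fun t => B t ω) (hB.2.1 ω) hcd.le c
      (fun y hy => hM y (Set.Icc_subset_Icc (hab.trans hbc).le le_rfl hy)) hne₂,
    EReal.coe_eq_coe_iff] at hω
  simp only [Set.mem_ofPred_eq, Φ, Sum.elim_inl, Sum.elim_inr]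
  linarith

/-- For `h` upper semicontinuous, bounded above and not identically `-oo` on
either `[a,b]` or `[c,d]` (with `a < b < c < d`), and `B` a Brownian motion on
`[a,d]` started from `B a = 0`, almost surely the maxima of `B + h` over
`[a,b]` and over `[c,d]` differ. -/
theorem max_over_disjoint_intervals_ne
    {Ω : Type*} [MeasurableSpace Ω] (P : Measure Ω) [IsProbabilityMeasure P]
    (a b c d : ℝ) (hab : a < b) (hbc : b < c) (hcd : c < d)
    (B : ℝ → Ω → ℝ) (hB : IsStandardBM P a B)
    (h : ℝ → EReal)
    (husc : UpperSemicontinuousOn h (Set.Icc a d))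
    (hbdd : ∃ M : ℝ, ∀ y ∈ Set.Icc a d, h y ≤ (M : EReal))
    (hne₁ : ∃ y ∈ Set.Icc a b, h y ≠ ⊥)
    (hne₂ : ∃ y ∈ Set.Icc c d, h y ≠ ⊥) :
    ∀ᵐ ω ∂P,
      (⨆ y : Set.Icc a b, (((B y.1 ω : ℝ) : EReal) + h y.1)) ≠
      (⨆ y : Set.Icc c d, (((B y.1 ω : ℝ) : EReal) + h y.1)) :=
  max_over_disjoint_intervals_ne_general P a b c d hab hbc hcd B hB h hbdd hne₁ hne₂
end

section
/- Let h : ℝ → ℝ satisfy |h(t) − h(0)| ≤ C|t|^α for all t in a neighborhood of 0, with constants C > 0 and α > 1/2, and let B be a standard Brownian motion with B(0) = 0. Then for any a < 0 < b, almost surely the function B + h does not attain its maximum over [a,b] at the point 0. -/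
/-!
Along the times `t n = 2^(-n²)` the increments `B (t n) - B (t (n+1))` are independent with
variance comparable to `t n`, so by the second Borel–Cantelli lemma they exceed `√(t n)`
infinitely often, while by Chebyshev and the first Borel–Cantelli lemma
`|B (t (n+1))| < √(t n) / 2` eventually. Hence `B s > √s / 2` for arbitrarily small `s > 0`,
whereas `α > 1/2` gives `h s ≥ h 0 - √s / 2` for small `s > 0`, so `B s + h s > B 0 + h 0`.
-/

open MeasureTheory

open ProbabilityTheory Filter Set
open scoped NNReal ENNReal Topology

namespace ProbabilityTheory

lemma gaussianReal_Ici_sqrt_two_pos : 0 < gaussianReal 0 1 (Ici √2) :=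
  pos_iff_ne_zero.2 fun h => by simpa using gaussianReal_absolutelyContinuous' 0 one_ne_zero h

lemma gaussianReal_Ici_sqrt_two_le {v : ℝ≥0} {c : ℝ} (hc : c ^ 2 ≤ 2 * v) :
    gaussianReal 0 1 (Ici √2) ≤ gaussianReal 0 v (Ici c) := by
  have hmap : (gaussianReal 0 1).map (√v * ·) = gaussianReal 0 v := by
    rw [gaussianReal_map_const_mul, mul_zero, mul_one]
    congr
    exact Real.sq_sqrt v.2
  rw [← hmap, Measure.map_apply (measurable_const_mul _) measurableSet_Ici]
  refine measure_mono fun x (hx : √2 ≤ x) => show c ≤ √v * x from ?_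
  calc c ≤ √(2 * v) := (le_abs_self c).trans (Real.abs_le_sqrt hc)
    _ = √v * √2 := by rw [Real.sqrt_mul zero_le_two, mul_comm]
    _ ≤ √v * x := by gcongr

lemma gaussianReal_abs_sub_ge_le (μ : ℝ) (v : ℝ≥0) {c : ℝ} (hc : 0 < c) :
    gaussianReal μ v {x | c ≤ |x - μ|} ≤ ENNReal.ofReal (v / c ^ 2) := by
  simpa [integral_id_gaussianReal, variance_id_gaussianReal] using
    meas_ge_le_variance_div_sq (memLp_id_gaussianReal 2) hc

lemma iIndepFun.iIndepSet_preimage {ι Ω β : Type*} [MeasurableSpace Ω] [MeasurableSpace β]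
    {μ : Measure Ω} {X : ι → Ω → β} (hX : iIndepFun X μ) (hXm : ∀ i, Measurable (X i))
    {S : ι → Set β} (hS : ∀ i, MeasurableSet (S i)) :
    iIndepSet (fun i => X i ⁻¹' S i) μ :=
  (iIndepSet_iff_meas_biInter fun i => hXm i (hS i)).2 fun _ =>
    hX.meas_biInter fun i _ => ⟨S i, hS i, rfl⟩

end ProbabilityTheory

lemma eventually_mul_rpow_le_mul_sqrt {α : ℝ} (hα : 1 / 2 < α) (C : ℝ) {ε : ℝ} (hε : 0 < ε) :
    ∀ᶠ s in 𝓝[>] (0 : ℝ), C * s ^ α ≤ ε * √s := by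
  have hlim : Tendsto (fun s : ℝ => C * s ^ (α - 1 / 2)) (𝓝[>] 0) (𝓝 0) := by
    have := ((Real.continuousAt_rpow_const 0 (α - 1 / 2) (Or.inr (by linarith))).const_mul C).tendsto
    rw [Real.zero_rpow (by linarith), mul_zero] at this
    exact this.mono_left nhdsWithin_le_nhds
  filter_upwards [hlim.eventually_lt_const hε, self_mem_nhdsWithin] with s hs (hs0 : 0 < s)
  calc C * s ^ α = C * s ^ (α - 1 / 2) * √s := by
        rw [Real.sqrt_eq_rpow, mul_assoc, ← Real.rpow_add hs0, sub_add_cancel]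
    _ ≤ ε * √s := by gcongr

namespace IsStandardBM

variable {Ω : Type*} [MeasurableSpace Ω] {P : Measure Ω} {a : ℝ} {B : ℝ → Ω → ℝ}

lemma map_eq (hB : IsStandardBM P a B) {t : ℝ} (ht : a ≤ t) :
    P.map (B t) = gaussianReal 0 (t - a).toNNReal := by
  simpa [hB.2.2.1] using hB.2.2.2.1 a t le_rfl ht

lemma iIndepFun_increments (hB : IsStandardBM P a B) {t : ℕ → ℝ} (ht : Antitone t)
    (hta : ∀ n, a ≤ t n) : iIndepFun (fun n ω => B (t n) ω - B (t (n + 1)) ω) P := by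
  refine iIndepFun_iff_finset.2 fun s => ?_
  obtain ⟨N, hN⟩ : ∃ N, ∀ k ∈ s, k < N :=
    ⟨s.sup id + 1, fun k hk => Nat.lt_succ_of_le (s.le_sup (f := id) hk)⟩
  have hindep := hB.2.2.2.2 N (fun i => t (N - i)) (fun i j hij => ht (Nat.sub_le_sub_left hij N))
    (fun i => hta _)
  have hinj : Function.Injective fun k : s => Fin.rev (⟨k, hN k k.2⟩ : Fin N) := by
    intro k l hkl
    exact Subtype.ext (congrArg Fin.val (Fin.rev_injective hkl))
  convert hindep.precomp hinj using 2 with k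
  ext ω
  have hk := hN k k.2
  simp only [Finset.restrict, Fin.val_succ, Fin.val_castSucc, Fin.val_rev]
  congr 3 <;> omega

lemma ae_frequently_sqrt_le_increment (hB : IsStandardBM P 0 B) {t : ℕ → ℝ} (ht0 : ∀ n, 0 ≤ t n)
    (ht : ∀ n, 2 * t (n + 1) ≤ t n) :
    ∀ᵐ ω ∂P, ∃ᶠ n in atTop, √(t n) ≤ B (t n) ω - B (t (n + 1)) ω := by
  have hanti : Antitone t := antitone_nat_of_succ_le fun n => by linarith [ht n, ht0 (n + 1)]
  have hXm : ∀ n, Measurable fun ω => B (t n) ω - B (t (n + 1)) ω :=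
    fun n => (hB.1 _).sub (hB.1 _)
  set A : ℕ → Set Ω := fun n => (fun ω => B (t n) ω - B (t (n + 1)) ω) ⁻¹' Ici √(t n)
  have hAm : ∀ n, MeasurableSet (A n) := fun n => hXm n measurableSet_Ici
  have hA : iIndepSet A P :=
    (hB.iIndepFun_increments hanti ht0).iIndepSet_preimage hXm fun _ => measurableSet_Ici
  have hPA : ∀ n, gaussianReal 0 1 (Ici √2) ≤ P (A n) := fun n => by
    rw [← Measure.map_apply (hXm n) measurableSet_Ici,
      hB.2.2.2.1 _ _ (ht0 _) (hanti n.le_succ)]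
    apply gaussianReal_Ici_sqrt_two_le
    rw [Real.sq_sqrt (ht0 n), Real.coe_toNNReal _ (sub_nonneg.2 (hanti n.le_succ))]
    linarith [ht n]
  have hsum : ∑' n, P (A n) = ∞ := top_le_iff.1 <|
    (ENNReal.tsum_const_eq_top_of_ne_zero gaussianReal_Ici_sqrt_two_pos.ne').ge.trans
      (ENNReal.tsum_le_tsum hPA)
  have := hA.isProbabilityMeasure
  have hlimsup := (ae_iff_measure_eq (MeasurableSet.measurableSet_limsup hAm).nullMeasurableSet).2
    ((measure_limsup_eq_one hAm hA hsum).trans measure_univ.symm)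
  filter_upwards [hlimsup] with ω hω
  exact mem_limsup_iff_frequently_mem.1 hω

lemma ae_eventually_abs_lt (hB : IsStandardBM P 0 B) {s c : ℕ → ℝ} (hs : ∀ n, 0 ≤ s n)
    (hc : ∀ n, 0 < c n) (hsum : Summable fun n => s n / c n ^ 2) :
    ∀ᵐ ω ∂P, ∀ᶠ n in atTop, |B (s n) ω| < c n := by
  have hP : ∀ n, P {ω | c n ≤ |B (s n) ω|} ≤ ENNReal.ofReal (s n / c n ^ 2) := fun n => by
    have := gaussianReal_abs_sub_ge_le 0 (s n).toNNReal (hc n)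
    have hmap := hB.map_eq (hs n)
    rw [sub_zero] at hmap
    simp only [sub_zero] at this
    rwa [← hmap, Measure.map_apply (hB.1 _) (measurableSet_le measurable_const measurable_abs),
      Real.coe_toNNReal _ (hs n)] at this
  have hfin : ∑' n, P {ω | c n ≤ |B (s n) ω|} ≠ ∞ :=
    ne_top_of_le_ne_top hsum.tsum_ofReal_ne_top (ENNReal.tsum_le_tsum hP)
  filter_upwards [ae_eventually_notMem hfin] with ω hω
  simpa using hω

lemma ae_frequently_sqrt_div_two_lt (hB : IsStandardBM P 0 B) :
    ∀ᵐ ω ∂P, ∃ᶠ s in 𝓝[>] 0, √s / 2 < B s ω := by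
  -- `t (n + 1) / t n` is summable, so `B (t (n + 1))` is negligible against `√(t n)`.
  set t : ℕ → ℝ := fun n => 2⁻¹ ^ n ^ 2
  have ht0 : ∀ n, 0 < t n := fun n => by positivity
  have ht_succ : ∀ n, t (n + 1) = 2⁻¹ * 4⁻¹ ^ n * t n := fun n => by
    simp only [t, show (n + 1) ^ 2 = 2 * n + 1 + n ^ 2 by ring, pow_add, pow_mul]
    ring
  have ht : ∀ n, 2 * t (n + 1) ≤ t n := fun n => by
    rw [ht_succ, ← mul_assoc, ← mul_assoc, mul_inv_cancel₀ two_ne_zero, one_mul]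
    exact mul_le_of_le_one_left (ht0 n).le (pow_le_one₀ (by norm_num) (by norm_num))
  have htend : Tendsto t atTop (𝓝[>] 0) :=
    tendsto_nhdsWithin_iff.2 ⟨(tendsto_pow_atTop_nhds_zero_of_lt_one (by norm_num)
      (by norm_num)).comp (tendsto_pow_atTop two_ne_zero), .of_forall ht0⟩
  have hsum : Summable fun n => t (n + 1) / (√(t n) / 2) ^ 2 := by
    refine ((summable_geometric_of_lt_one (by norm_num) (by norm_num : (4⁻¹ : ℝ) < 1)).mul_left
      2).congr fun n => ?_
    rw [div_pow, Real.sq_sqrt (ht0 n).le, ht_succ]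
    field_simp [(ht0 n).ne']
  filter_upwards [hB.ae_frequently_sqrt_le_increment (fun n => (ht0 n).le) ht,
    hB.ae_eventually_abs_lt (fun n => (ht0 (n + 1)).le) (fun n => by have := ht0 n; positivity)
      hsum] with ω hincr hsmall
  refine htend.frequently ((hincr.and_eventually hsmall).mono fun n ⟨hn, hn'⟩ => ?_)
  linarith [neg_abs_le (B (t (n + 1)) ω)]

end IsStandardBM

theorem bm_plus_holder_max_not_at_zero_general
    {Ω : Type*} [MeasurableSpace Ω] (P : Measure Ω)
    (B : ℝ → Ω → ℝ) (hB : IsStandardBM P 0 B)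
    (h : ℝ → ℝ) (C α : ℝ) (hα : 1 / 2 < α)
    (δ : ℝ) (hδ : 0 < δ)
    (hhol : ∀ t : ℝ, |t| < δ → |h t - h 0| ≤ C * |t| ^ α)
    (a b : ℝ) (ha : a < 0) (hb : 0 < b) :
    ∀ᵐ ω ∂P, ¬ IsMaxOn (fun t => B t ω + h t) (Set.Icc a b) 0 := by
  have hh : ∀ᶠ s in 𝓝[>] 0, h 0 - √s / 2 ≤ h s := by
    filter_upwards [eventually_mul_rpow_le_mul_sqrt hα C one_half_pos,
      nhdsWithin_le_nhds (Iio_mem_nhds hδ), self_mem_nhdsWithin] with s hCs hsδ (hs0 : 0 < s)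
    have hs := hhol s (by rwa [abs_of_pos hs0])
    rw [abs_of_pos hs0] at hs
    linarith [(abs_le.1 hs).1]
  have hIcc : ∀ᶠ s in 𝓝[>] 0, s ∈ Icc a b := nhdsWithin_le_nhds (Icc_mem_nhds ha hb)
  filter_upwards [hB.ae_frequently_sqrt_div_two_lt] with ω hω hmax
  obtain ⟨s, hBs, hhs, hs⟩ := (hω.and_eventually (hh.and hIcc)).exists
  have hle := isMaxOn_iff.1 hmax s hs
  simp only [hB.2.2.1 ω, zero_add] at hle
  linarith

/-- If `|h t - h 0| <= C * |t|^alpha` near `0` with `alpha > 1/2`, and `B` is a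
standard Brownian motion with `B 0 = 0`, then for any `a < 0 < b`, almost
surely `B + h` does not attain its maximum over `[a,b]` at `0`. -/
theorem bm_plus_holder_max_not_at_zero
    {Ω : Type*} [MeasurableSpace Ω] (P : Measure Ω) [IsProbabilityMeasure P]
    (B : ℝ → Ω → ℝ) (hB : IsStandardBM P 0 B)
    (h : ℝ → ℝ) (C α : ℝ) (hC : 0 < C) (hα : 1 / 2 < α)
    (δ : ℝ) (hδ : 0 < δ)
    (hhol : ∀ t : ℝ, |t| < δ → |h t - h 0| ≤ C * |t| ^ α)
    (a b : ℝ) (ha : a < 0) (hb : 0 < b) :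
    ∀ᵐ ω ∂P, ¬ IsMaxOn (fun t => B t ω + h t) (Set.Icc a b) 0 :=
  bm_plus_holder_max_not_at_zero_general P B hB h C α hα δ hδ hhol a b ha hb
end
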